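/- Let K be a field, let n ≥ 1, let a_0, a_1, …, a_n ∈ ℤ, and set s_k := a_0 + a_1 + ⋯ + a_k for 0 ≤ k ≤ n. Let D_0, D_1, …, D_n and E be K-linear derivations of LaurentPolynomial K with D_k t = t^{a_k + 1} for each k and E t = t^{s_n + 1}. Then the left-normed bracket satisfies ⁅D_0, D_1, …, D_n⁆ = (∏_{k=1}^{n} ((a_k − s_{k−1} : ℤ) : K)) • E. (The value of a left-normed monomial on the basis elements e_{a_0}, …, e_{a_n} of U_1 is an explicit scalar multiple of e_{a_0 + ⋯ + a_n}.) -/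

import Mathlib

/-!
A derivation `D` of `K[t, t⁻¹]` is determined by `D t`, because `D (tⁿ) = n tⁿ⁻¹ D t` for every
`n ∈ ℤ`. For the derivations with `P t = c t^(u+1)` and `Q t = d t^(v+1)` this gives
`⁅P, Q⁆ t = (v - u) c d t^(u+v+1)`, and induction on `n` computes the left-normed bracket on `t`.
-/

open LaurentPolynomial

variable (K : Type*) [Field K]

/-- The left-normed bracket `⁅D 0, D 1, …, D n⁆` of derivations. -/
noncomputable def lnDer {A : Type*} [CommRing A] [Algebra K A]
    (D : ℕ → Derivation K A A) : ℕ → Derivation K A A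
  | 0 => D 0
  | n + 1 => ⁅lnDer D n, D (n + 1)⁆

namespace LaurentPolynomial

section Module

variable {R M : Type*} [CommRing R] [AddCommGroup M] [Module R[T;T⁻¹] M] [Module R M]

theorem derivation_T_natCast (D : Derivation R R[T;T⁻¹] M) (m : ℕ) :
    D (T m) = (m : ℤ) • (T ((m : ℤ) - 1) : R[T;T⁻¹]) • D (T 1) := by
  cases m with
  | zero => simp [T_zero]
  | succ m =>
    have hT : (T ((m + 1 : ℕ) : ℤ) : R[T;T⁻¹]) = T 1 ^ (m + 1) := by rw [T_pow]; simp
    rw [hT, D.leibniz_pow, T_pow, natCast_zsmul]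
    simp

theorem derivation_T (D : Derivation R R[T;T⁻¹] M) (n : ℤ) :
    D (T n) = n • (T (n - 1) : R[T;T⁻¹]) • D (T 1) := by
  obtain ⟨m, rfl | rfl⟩ := Int.eq_nat_or_neg n
  · exact derivation_T_natCast D m
  · have hinv : (T (-(m : ℤ)) : R[T;T⁻¹]) = ⅟(T m) := rfl
    rw [hinv, D.leibniz_invOf, derivation_T_natCast, invOf_T, T_pow, neg_smul,
      smul_comm _ (m : ℤ), smul_smul, ← T_add, neg_smul]
    congr 4
    push_cast
    ring

theorem derivation_ext [IsScalarTower R R[T;T⁻¹] M] {D₁ D₂ : Derivation R R[T;T⁻¹] M}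
    (h : D₁ (T 1) = D₂ (T 1)) : D₁ = D₂ := by
  ext p
  induction p using LaurentPolynomial.induction_on' with
  | add p q hp hq => rw [map_add, map_add, hp, hq]
  | C_mul_T n a =>
    rw [← smul_eq_C_mul, D₁.map_smul, D₂.map_smul, derivation_T D₁ n, derivation_T D₂ n, h]

end Module

theorem commutator_apply_T_one {R : Type*} [CommRing R] {P Q : Derivation R R[T;T⁻¹] R[T;T⁻¹]}
    {c d : R} {u v : ℤ} (hP : P (T 1) = c • T (u + 1)) (hQ : Q (T 1) = d • T (v + 1)) :
    ⁅P, Q⁆ (T 1) = (((v - u : ℤ) : R) * c * d) • T (u + v + 1) := by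
  have hTT (m n : ℤ) : (T m : R[T;T⁻¹]) • T n = (T (m + n) : R[T;T⁻¹]) := by rw [smul_eq_mul, T_add]
  rw [Derivation.commutator_apply, hQ, hP, P.map_smul, Q.map_smul, derivation_T P, derivation_T Q,
    hP, hQ, smul_comm _ c, smul_comm _ d, hTT, hTT, smul_comm _ c, smul_comm _ d]
  simp only [smul_eq_C_mul, zsmul_eq_mul, map_mul, map_intCast]
  push_cast
  rw [show v + 1 - 1 + (u + 1) = u + v + 1 by ring, show u + 1 - 1 + (v + 1) = u + v + 1 by ring]
  ring

end LaurentPolynomial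

theorem lnDer_apply_T_one (n : ℕ) (a : ℕ → ℤ)
    (D : ℕ → Derivation K (LaurentPolynomial K) (LaurentPolynomial K))
    (hD : ∀ k ≤ n, (D k) (T 1) = T (a k + 1)) :
    lnDer K D n (T 1) =
      (∏ k ∈ Finset.Icc 1 n, ((a k - ∑ j ∈ Finset.range k, a j : ℤ) : K)) •
        T ((∑ j ∈ Finset.range (n + 1), a j) + 1) := by
  induction n with
  | zero => simpa [lnDer] using hD 0 le_rfl
  | succ n ih =>
    have hstep := commutator_apply_T_one (ih fun k hk => hD k (hk.trans n.le_succ))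
      (d := 1) (by rw [one_smul, hD (n + 1) le_rfl])
    rw [lnDer, hstep, Finset.prod_Icc_succ_top (by omega), Finset.sum_range_succ _ (n + 1),
      mul_one, mul_comm]

theorem lnDer_eq_prod_smul (n : ℕ) (a : ℕ → ℤ)
    (D : ℕ → Derivation K (LaurentPolynomial K) (LaurentPolynomial K))
    (E : Derivation K (LaurentPolynomial K) (LaurentPolynomial K))
    (hD : ∀ k ≤ n, (D k) (T 1) = T (a k + 1))
    (hE : E (T 1) = T ((∑ j ∈ Finset.range (n + 1), a j) + 1)) :
    lnDer K D n =
      (∏ k ∈ Finset.Icc 1 n, ((a k - ∑ j ∈ Finset.range k, a j : ℤ) : K)) • E := by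
  refine LaurentPolynomial.derivation_ext ?_
  rw [lnDer_apply_T_one K n a D hD, Derivation.smul_apply, hE]
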